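/- For t > 0, the modified Bessel function of the second kind satisfies K_t(x) ~ (Γ(t)/2)·(2/x)^t as x → 0⁺, i.e., lim_{x→0⁺} K_t(x)·(x/2)^t = Γ(t)/2. -/

import Mathlib

/-!
With `c = (x/2)²`, the substitution `s ↦ c/s` turns `K_t(x) (x/2)^t` into
`½ ∫₀^∞ u^{t-1} e^{-u - c/u} du`. As `c → 0⁺` this tends to `½ ∫₀^∞ u^{t-1} e^{-u} du = Γ(t)/2`
by dominated convergence, with dominating function `u^{t-1} e^{-u}`.
-/

open Real MeasureTheory Set Filter

/-- Modified Bessel function of the second kind of order `a`, via the integral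
representation `K_a(z) = (1/2)(z/2)^a ∫₀^∞ t^{-a-1} exp(-t - z²/(4t)) dt` (valid for `z > 0`). -/
noncomputable def besselK (a z : ℝ) : ℝ :=
  (1 / 2) * (z / 2) ^ a * ∫ t in Ioi (0 : ℝ), t ^ (-a - 1) * Real.exp (-t - z ^ 2 / (4 * t))

theorem integral_comp_div_Ioi {E : Type*} [NormedAddCommGroup E] [NormedSpace ℝ E]
    (g : ℝ → E) {c : ℝ} (hc : 0 < c) :
    ∫ x in Ioi 0, (c / x ^ 2) • g (c / x) = ∫ y in Ioi 0, g y := by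
  have himage : (c / ·) '' Ioi (0 : ℝ) = Ioi 0 := by
    ext y
    refine ⟨?_, fun hy => ⟨c / y, div_pos hc hy, div_div_cancel₀ hc.ne'⟩⟩
    rintro ⟨x, hx, rfl⟩
    exact div_pos hc hx
  have hderiv : ∀ x ∈ Ioi (0 : ℝ), HasDerivWithinAt (c / ·) (-c / x ^ 2) (Ioi 0) x := by
    intro x hx
    simpa [div_eq_mul_inv, neg_div] using
      ((hasDerivAt_inv (ne_of_gt hx)).const_mul c).hasDerivWithinAt
  have hinj : InjOn (c / ·) (Ioi (0 : ℝ)) := fun x _ y _ hxy =>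
    inv_injective (by simpa [div_eq_mul_inv, hc.ne'] using hxy)
  have hsubst := integral_image_eq_integral_abs_deriv_smul measurableSet_Ioi hderiv hinj g
  rw [himage] at hsubst
  rw [hsubst]
  refine setIntegral_congr_fun measurableSet_Ioi fun x (hx : 0 < x) => ?_
  rw [neg_div, abs_neg, abs_of_pos (by positivity)]

theorem integral_rpow_mul_exp_neg_sub_div (a : ℝ) {c : ℝ} (hc : 0 < c) :
    ∫ u in Ioi 0, u ^ (a - 1) * exp (-u - c / u)
      = c ^ a * ∫ s in Ioi 0, s ^ (-a - 1) * exp (-s - c / s) := by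
  rw [← integral_comp_div_Ioi _ hc, ← integral_const_mul]
  refine setIntegral_congr_fun measurableSet_Ioi fun x (hx : 0 < x) => ?_
  have hpow : c / x ^ 2 * (c / x) ^ (a - 1) = c ^ a * x ^ (-a - 1) := by
    rw [div_rpow hc.le hx.le, rpow_sub_one hc.ne', show -a - 1 = -(a - 1) - 2 by ring,
      rpow_sub hx (-(a - 1)) 2, rpow_neg hx.le, rpow_two]
    field_simp
  rw [smul_eq_mul, ← mul_assoc, hpow, div_div_cancel₀ hc.ne', mul_assoc]
  ring_nf

theorem besselK_mul_half_rpow (a : ℝ) {x : ℝ} (hx : 0 < x) :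
    besselK a x * (x / 2) ^ a
      = 1 / 2 * ∫ u in Ioi 0, u ^ (a - 1) * exp (-u - (x / 2) ^ 2 / u) := by
  have hsq : ∀ s : ℝ, x ^ 2 / (4 * s) = (x / 2) ^ 2 / s := fun s => by ring
  have hsq_rpow : ((x / 2) ^ 2) ^ a = (x / 2) ^ a * (x / 2) ^ a := by
    rw [sq, mul_rpow (by positivity) (by positivity)]
  rw [integral_rpow_mul_exp_neg_sub_div a (by positivity), besselK, hsq_rpow]
  simp only [hsq]
  ring

theorem tendsto_integral_rpow_mul_exp_neg_sub_div {a : ℝ} (ha : 0 < a) :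
    Tendsto (fun c => ∫ u in Ioi 0, u ^ (a - 1) * exp (-u - c / u)) (nhdsWithin 0 (Ici 0))
      (nhds (Gamma a)) := by
  have hGamma : Gamma a = ∫ u in Ioi 0, u ^ (a - 1) * exp (-u - 0 / u) := by
    simp_rw [Gamma_eq_integral ha, zero_div, sub_zero, mul_comm]
  rw [hGamma]
  refine tendsto_integral_filter_of_dominated_convergence (fun u => u ^ (a - 1) * exp (-u))
    ?_ ?_ ?_ ?_
  · refine Eventually.of_forall fun c => ContinuousOn.aestronglyMeasurable ?_ measurableSet_Ioi
    intro u (hu : 0 < u)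
    exact ((continuousAt_rpow_const u _ (Or.inl hu.ne')).mul
      (by fun_prop (disch := exact hu.ne'))).continuousWithinAt
  · filter_upwards [self_mem_nhdsWithin] with c (hc : 0 ≤ c)
    filter_upwards [ae_restrict_mem measurableSet_Ioi] with u (hu : 0 < u)
    rw [norm_of_nonneg (by positivity)]
    gcongr
    linarith [div_nonneg hc hu.le]
  · exact (GammaIntegral_convergent ha).congr_fun (fun u _ => mul_comm _ _) measurableSet_Ioi
  · exact Eventually.of_forall fun u =>
      (Continuous.tendsto (by fun_prop) 0).mono_left nhdsWithin_le_nhds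

/-- For `t > 0`, `K_t(x) (x/2)^t → Γ(t)/2` as `x → 0⁺`. -/
theorem stmt_6 (t : ℝ) (ht : 0 < t) :
    Tendsto (fun x : ℝ => besselK t x * (x / 2) ^ t) (nhdsWithin 0 (Ioi 0))
      (nhds (Real.Gamma t / 2)) := by
  have hsq : Tendsto (fun x : ℝ => (x / 2) ^ 2) (nhdsWithin 0 (Ioi 0)) (nhdsWithin 0 (Ici 0)) :=
    tendsto_nhdsWithin_iff.mpr
      ⟨(Continuous.tendsto' (by fun_prop) 0 0 (by norm_num)).mono_left nhdsWithin_le_nhds,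
        Eventually.of_forall fun x => sq_nonneg (x / 2)⟩
  have hlim := ((tendsto_integral_rpow_mul_exp_neg_sub_div ht).comp hsq).const_mul (1 / 2)
  rw [one_div_mul_eq_div] at hlim
  refine hlim.congr' ?_
  filter_upwards [self_mem_nhdsWithin] with x (hx : 0 < x)
  exact (besselK_mul_half_rpow t hx).symm
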